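/- arXiv:2401.00760 — 6 statements merged into one kernel-verified Lean document; each statement's English description precedes it below -/
import Mathlib

section
/- If g is factored into a product of three irreducible quadratic polynomials Q1, Q2, Q3 in k[x,y], then g can be written in the form (A): g = H1·H2 with H1 = y² + (a1x² + a2x + a3) and H2 = y² + (−4x⁴ + a4x³ + a5x² + a6x + a7) for some a1,…,a7 ∈ k. -/
/-!
Regard `g` as the monic quartic `y⁴ + p(x) y² + q(x)` in `y` over `k[x]`. A factor of a monic
polynomial has a unit, hence constant, leading coefficient in `y`; since no factor is a constant,
comparing `y`-degrees shows that one factor is `c y² + B y + A` and the other two are linear in `y`.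
The coefficients of `y³` and `y` of the product give `B (D D' - u² A) = 0`, where `u` is the product
of the leading coefficients of the linear factors and `D D'` the product of their constant terms.
If `B = 0` the product regroups as `(y² + u A) (y² + c D D')`; otherwise `p = 2 u A - u² B²` has
degree at most `2`, contradicting the coefficient `-4 ≠ 0` of `x⁴ y²`.
-/

namespace Finsupp

lemma single_add_single_inj {α M : Type*} [AddCommMonoid M] {a b : α} (hab : a ≠ b) {m n i j : M} :
    single a m + single b n = single a i + single b j ↔ m = i ∧ n = j := by
  refine ⟨fun h ↦ ⟨?_, ?_⟩, fun ⟨hm, hn⟩ ↦ hm ▸ hn ▸ rfl⟩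
  · simpa [single_apply, hab] using congr($h a)
  · simpa [single_apply, hab.symm] using congr($h b)

end Finsupp

namespace Polynomial

lemma monic_X_pow_four_add {S : Type*} [CommSemiring S] [Nontrivial S] (p q : S) :
    (X ^ 4 + C p * X ^ 2 + C q : S[X]).Monic := by
  monicity!

namespace Bivariate

section CommSemiring

variable {R : Type*} [CommSemiring R]

lemma coeff_equivMvPolynomial (P : R[X][Y]) (i j : ℕ) :
    (equivMvPolynomial R P).coeff (Finsupp.single 0 i + Finsupp.single 1 j) =
      (P.coeff j).coeff i := by
  induction P using Polynomial.induction_on' with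
  | add P Q hP hQ => simp [hP, hQ]
  | monomial n a =>
    induction a using Polynomial.induction_on' with
    | add a b ha hb => simp_all
    | monomial m c =>
      have : equivMvPolynomial R (monomial n (monomial m c)) =
          MvPolynomial.monomial (Finsupp.single 0 m + Finsupp.single 1 n) c := by
        simp [← C_mul_X_pow_eq_monomial, MvPolynomial.X_pow_eq_monomial,
          MvPolynomial.C_mul_monomial, MvPolynomial.monomial_mul]
      simp only [this, MvPolynomial.coeff_monomial, coeff_monomial,
        Finsupp.single_add_single_inj zero_ne_one]
      by_cases hn : n = j <;> by_cases hm : m = i <;> simp [hn, hm, coeff_monomial]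

lemma coeff_coeff_eq_zero_of_totalDegree_lt {P : R[X][Y]} {i j : ℕ}
    (h : (equivMvPolynomial R P).totalDegree < i + j) : (P.coeff j).coeff i = 0 := by
  rw [← coeff_equivMvPolynomial]
  apply MvPolynomial.coeff_eq_zero_of_totalDegree_lt
  change _ < Finsupp.degree _
  simpa [map_add, Finsupp.degree_single] using h

lemma natDegree_le_totalDegree (P : R[X][Y]) :
    P.natDegree ≤ (equivMvPolynomial R P).totalDegree := by
  refine natDegree_le_iff_coeff_eq_zero.mpr fun j hj ↦ ?_
  ext i
  simpa using coeff_coeff_eq_zero_of_totalDegree_lt (by omega)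

lemma natDegree_coeff_le_totalDegree_sub (P : R[X][Y]) (j : ℕ) :
    (P.coeff j).natDegree ≤ (equivMvPolynomial R P).totalDegree - j :=
  natDegree_le_iff_coeff_eq_zero.mpr fun _ hi ↦ coeff_coeff_eq_zero_of_totalDegree_lt (by omega)

lemma natDegree_pos_of_leadingCoeff_eq_C {P : R[X][Y]} {r : R} (hr : P.leadingCoeff = C r)
    (hP : (equivMvPolynomial R P).totalDegree ≠ 0) : 0 < P.natDegree := by
  refine Nat.pos_of_ne_zero fun h0 ↦ hP ?_
  have hPC : P = C (C r) := by
    rw [eq_C_of_natDegree_eq_zero h0, ← h0, ← leadingCoeff, hr]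
  rw [hPC, equivMvPolynomial_C_C, MvPolynomial.totalDegree_C]

end CommSemiring

section IsDomain

variable {k : Type*} [CommRing k] [IsDomain k]

lemma exists_leadingCoeff_eq_C_of_dvd_monic {P F : k[X][Y]} (hF : F.Monic) (hPF : P ∣ F) :
    ∃ r : k, P.leadingCoeff = C r := by
  obtain ⟨r, -, hr⟩ := Polynomial.isUnit_iff.mp (hF.isUnit_leadingCoeff_of_dvd hPF)
  exact ⟨r, hr.symm⟩

lemma exists_add_mul_of_quadratic_mul_linear_mul_linear {c e e' : k} {A B D D' p q : k[X]}
    (hB : B.natDegree ≤ 1) (hA : A.natDegree ≤ 2) (hp : p.coeff 4 ≠ 0)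
    (h : (C (C c) * Y ^ 2 + C B * Y + C A) * (C (C e) * Y + C D) * (C (C e') * Y + C D') =
      Y ^ 4 + C p * Y ^ 2 + C q) :
    ∃ f₁ f₂ : k[X], f₁.natDegree ≤ 2 ∧ p = f₁ + f₂ ∧ q = f₁ * f₂ := by
  set u : k := e * e'
  set S : k[X] := C e * D' + C e' * D
  have hexp : (C (C c) * Y ^ 2 + C B * Y + C A) * (C (C e) * Y + C D) * (C (C e') * Y + C D') =
      C (C c * C u) * Y ^ 4 + C (C c * S + B * C u) * Y ^ 3
        + C (C c * (D * D') + B * S + A * C u) * Y ^ 2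
        + C (B * (D * D') + A * S) * Y + C (A * (D * D')) := by
    simp only [u, S, map_add, map_mul]; ring
  rw [hexp] at h
  have h4 := congr(coeff $h 4)
  have h3 := congr(coeff $h 3)
  have h2 := congr(coeff $h 2)
  have h1 := congr(coeff $h 1)
  have h0 := congr(coeff $h 0)
  simp only [coeff_add, coeff_C_mul_X_pow, coeff_C_mul_X, coeff_C, coeff_X_pow] at h4 h3 h2 h1 h0
  norm_num at h4 h3 h2 h1 h0
  have hS : S = -(C u ^ 2 * B) := by linear_combination C u * h3 - S * h4
  have hB_mul : B * (D * D' - C u ^ 2 * A) = 0 := by linear_combination h1 - A * hS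
  rcases mul_eq_zero.mp hB_mul with rfl | hDD'
  · refine ⟨C u * A, C c * (D * D'), natDegree_C_mul_le _ _ |>.trans hA, ?_, ?_⟩
    · linear_combination -h2
    · linear_combination -h0 - A * (D * D') * h4
  · refine absurd ?_ hp
    have hp' : p = C (2 * u) * A - C (u ^ 2) * B ^ 2 := by
      simp only [map_mul, map_pow, map_ofNat]
      linear_combination -h2 + C c * hDD' + B * hS + (C u * A) * h4
    have hA4 : A.coeff 4 = 0 := coeff_eq_zero_of_natDegree_lt (by omega)
    have hB4 : (B ^ 2).coeff 4 = 0 :=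
      coeff_eq_zero_of_natDegree_lt ((natDegree_pow_le).trans_lt (by nlinarith))
    rw [hp', coeff_sub, coeff_C_mul, coeff_C_mul, hA4, hB4, mul_zero, mul_zero, sub_zero]

lemma exists_add_mul_of_natDegree_eq_two_one_one {P L L' : k[X][Y]} {c e e' : k} {p q : k[X]}
    (hPt : (equivMvPolynomial k P).totalDegree ≤ 2) (hP : P.natDegree = 2)
    (hc : P.leadingCoeff = C c) (hL : L.natDegree = 1) (he : L.leadingCoeff = C e)
    (hL' : L'.natDegree = 1) (he' : L'.leadingCoeff = C e') (hp : p.coeff 4 ≠ 0)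
    (h : P * L * L' = Y ^ 4 + C p * Y ^ 2 + C q) :
    ∃ f₁ f₂ : k[X], f₁.natDegree ≤ 2 ∧ p = f₁ + f₂ ∧ q = f₁ * f₂ := by
  have hPeq : P = C (C c) * Y ^ 2 + C (P.coeff 1) * Y + C (P.coeff 0) := by
    rw [← hc, leadingCoeff, hP]
    exact eq_quadratic_of_degree_le_two (natDegree_le_iff_degree_le.mp hP.le)
  have hLeq : L = C (C e) * Y + C (L.coeff 0) := by
    rw [← he, leadingCoeff, hL]; exact eq_X_add_C_of_natDegree_le_one hL.le
  have hL'eq : L' = C (C e') * Y + C (L'.coeff 0) := by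
    rw [← he', leadingCoeff, hL']; exact eq_X_add_C_of_natDegree_le_one hL'.le
  rw [hPeq, hLeq, hL'eq] at h
  exact exists_add_mul_of_quadratic_mul_linear_mul_linear
    ((natDegree_coeff_le_totalDegree_sub P 1).trans (by omega))
    ((natDegree_coeff_le_totalDegree_sub P 0).trans (by omega)) hp h

lemma exists_add_mul_of_mul_mul_eq {P₁ P₂ P₃ : k[X][Y]} {p q : k[X]}
    (h₁ : (equivMvPolynomial k P₁).totalDegree = 2) (h₂ : (equivMvPolynomial k P₂).totalDegree = 2)
    (h₃ : (equivMvPolynomial k P₃).totalDegree = 2) (hp : p.coeff 4 ≠ 0)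
    (h : P₁ * P₂ * P₃ = Y ^ 4 + C p * Y ^ 2 + C q) :
    ∃ f₁ f₂ : k[X], f₁.natDegree ≤ 2 ∧ p = f₁ + f₂ ∧ q = f₁ * f₂ := by
  have hF := monic_X_pow_four_add p q
  obtain ⟨r₁, hr₁⟩ := exists_leadingCoeff_eq_C_of_dvd_monic hF (h ▸ (dvd_mul_right _ _).mul_right _)
  obtain ⟨r₂, hr₂⟩ := exists_leadingCoeff_eq_C_of_dvd_monic hF (h ▸ (dvd_mul_left _ _).mul_right _)
  obtain ⟨r₃, hr₃⟩ := exists_leadingCoeff_eq_C_of_dvd_monic hF (h ▸ dvd_mul_left _ _)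
  have hpos₁ := natDegree_pos_of_leadingCoeff_eq_C hr₁ (by omega)
  have hpos₂ := natDegree_pos_of_leadingCoeff_eq_C hr₂ (by omega)
  have hpos₃ := natDegree_pos_of_leadingCoeff_eq_C hr₃ (by omega)
  have hle₁ := h₁ ▸ natDegree_le_totalDegree P₁
  have hle₂ := h₂ ▸ natDegree_le_totalDegree P₂
  have hle₃ := h₃ ▸ natDegree_le_totalDegree P₃
  have hsum : P₁.natDegree + P₂.natDegree + P₃.natDegree = 4 := by
    have hne : P₁ * P₂ * P₃ ≠ 0 := h ▸ hF.ne_zero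
    simp only [ne_eq, mul_eq_zero, not_or] at hne
    rw [← natDegree_mul hne.1.1 hne.1.2, ← natDegree_mul (mul_ne_zero hne.1.1 hne.1.2) hne.2, h]
    compute_degree!
  obtain ⟨d₁, d₂, d₃⟩ | ⟨d₂, d₁, d₃⟩ | ⟨d₃, d₁, d₂⟩ :
      (P₁.natDegree = 2 ∧ P₂.natDegree = 1 ∧ P₃.natDegree = 1) ∨
      (P₂.natDegree = 2 ∧ P₁.natDegree = 1 ∧ P₃.natDegree = 1) ∨
      (P₃.natDegree = 2 ∧ P₁.natDegree = 1 ∧ P₂.natDegree = 1) := by omega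
  · exact exists_add_mul_of_natDegree_eq_two_one_one h₁.le d₁ hr₁ d₂ hr₂ d₃ hr₃ hp h
  · exact exists_add_mul_of_natDegree_eq_two_one_one h₂.le d₂ hr₂ d₁ hr₁ d₃ hr₃ hp
      (by rw [← h]; ring)
  · exact exists_add_mul_of_natDegree_eq_two_one_one h₃.le d₃ hr₃ d₁ hr₁ d₂ hr₂ hp
      (by rw [← h]; ring)

end IsDomain

end Bivariate

end Polynomial

open MvPolynomial
open Polynomial.Bivariate
open scoped Polynomial

theorem stmt_4_general {k : Type*} [Field k] (hchar : ringChar k ≠ 2)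
    (b60 b50 b42 b40 b32 b30 b22 b20 b12 b10 b04 b02 b00 : k)
    (hb42 : b42 = -4) (hb04 : b04 = 1)
    (g : MvPolynomial (Fin 2) k)
    (hg : g = C b60 * X 0 ^ 6 + C b42 * X 0 ^ 4 * X 1 ^ 2
      + C b50 * X 0 ^ 5 + C b32 * X 0 ^ 3 * X 1 ^ 2
      + C b40 * X 0 ^ 4 + C b22 * X 0 ^ 2 * X 1 ^ 2 + C b04 * X 1 ^ 4
      + C b30 * X 0 ^ 3 + C b12 * X 0 * X 1 ^ 2
      + C b20 * X 0 ^ 2 + C b02 * X 1 ^ 2 + C b10 * X 0 + C b00)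
    (Q1 Q2 Q3 : MvPolynomial (Fin 2) k)
    (hdQ1 : Q1.totalDegree = 2) (hdQ2 : Q2.totalDegree = 2) (hdQ3 : Q3.totalDegree = 2)
    (hfact : g = Q1 * Q2 * Q3) :
    ∃ a1 a2 a3 a4 a5 a6 a7 : k,
      g = (X 1 ^ 2 + (C a1 * X 0 ^ 2 + C a2 * X 0 + C a3))
        * (X 1 ^ 2 + (C (-4 : k) * X 0 ^ 4 + C a4 * X 0 ^ 3 + C a5 * X 0 ^ 2
            + C a6 * X 0 + C a7)) := by
  subst hb42 hb04
  let e := (equivMvPolynomial k).symm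
  set p : k[X] := .C (-4) * .X ^ 4 + .C b32 * .X ^ 3 + .C b22 * .X ^ 2 + .C b12 * .X + .C b02
  set q : k[X] := .C b60 * .X ^ 6 + .C b50 * .X ^ 5 + .C b40 * .X ^ 4 + .C b30 * .X ^ 3
    + .C b20 * .X ^ 2 + .C b10 * .X + .C b00
  have hge : e g = Y ^ 4 + .C p * Y ^ 2 + .C q := by
    simp only [e, hg, p, q, map_add, map_mul, map_pow, map_neg, map_one,
      equivMvPolynomial_symm_C, equivMvPolynomial_symm_X_0, equivMvPolynomial_symm_X_1]
    ring
  have hp : p.coeff 4 ≠ 0 := by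
    have hp4 : p.coeff 4 = -2 ^ 2 := by
      simp only [p, Polynomial.coeff_add, Polynomial.coeff_C_mul, Polynomial.coeff_X_pow,
        Polynomial.coeff_X, Polynomial.coeff_C]
      norm_num
    rw [hp4, neg_ne_zero]
    exact pow_ne_zero 2 (Ring.two_ne_zero hchar)
  obtain ⟨f₁, f₂, hf₁, hpf, hqf⟩ := exists_add_mul_of_mul_mul_eq
    (P₁ := e Q1) (P₂ := e Q2) (P₃ := e Q3) (by simpa [e]) (by simpa [e]) (by simpa [e]) hp
    (by rw [← map_mul, ← map_mul, ← hfact, hge])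
  obtain ⟨a₁, a₂, a₃, rfl⟩ : ∃ a₁ a₂ a₃ : k, f₁ = .C a₁ * .X ^ 2 + .C a₂ * .X + .C a₃ :=
    ⟨_, _, _, Polynomial.eq_quadratic_of_degree_le_two
      (Polynomial.natDegree_le_iff_degree_le.mp hf₁)⟩
  refine ⟨a₁, a₂, a₃, b32, b22 - a₁, b12 - a₂, b02 - a₃, e.injective ?_⟩
  rw [hge, hqf, eq_sub_of_add_eq' hpf.symm]
  simp only [e, p, map_add, map_sub, map_mul, map_pow, map_neg,
    equivMvPolynomial_symm_C, equivMvPolynomial_symm_X_0, equivMvPolynomial_symm_X_1]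
  ring

/-- If g is a product of three irreducible quadratic polynomials in k[x,y],
then g can be written in the form (A). -/
theorem stmt_4 {k : Type*} [Field k] (hchar : ringChar k ≠ 2)
    (b60 b50 b42 b40 b32 b30 b22 b20 b12 b10 b04 b02 b00 : k)
    (hb42 : b42 = -4) (hb04 : b04 = 1)
    (g : MvPolynomial (Fin 2) k)
    (hg : g = C b60 * X 0 ^ 6 + C b42 * X 0 ^ 4 * X 1 ^ 2
      + C b50 * X 0 ^ 5 + C b32 * X 0 ^ 3 * X 1 ^ 2
      + C b40 * X 0 ^ 4 + C b22 * X 0 ^ 2 * X 1 ^ 2 + C b04 * X 1 ^ 4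
      + C b30 * X 0 ^ 3 + C b12 * X 0 * X 1 ^ 2
      + C b20 * X 0 ^ 2 + C b02 * X 1 ^ 2 + C b10 * X 0 + C b00)
    (hnz : ¬ (b60 = 0 ∧ b40 = 0 ∧ b20 = 0 ∧ b00 = 0))
    (Q1 Q2 Q3 : MvPolynomial (Fin 2) k)
    (hQ1 : Irreducible Q1) (hQ2 : Irreducible Q2) (hQ3 : Irreducible Q3)
    (hdQ1 : Q1.totalDegree = 2) (hdQ2 : Q2.totalDegree = 2) (hdQ3 : Q3.totalDegree = 2)
    (hfact : g = Q1 * Q2 * Q3) :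
    ∃ a1 a2 a3 a4 a5 a6 a7 : k,
      g = (X 1 ^ 2 + (C a1 * X 0 ^ 2 + C a2 * X 0 + C a3))
        * (X 1 ^ 2 + (C (-4 : k) * X 0 ^ 4 + C a4 * X 0 ^ 3 + C a5 * X 0 ^ 2
            + C a6 * X 0 + C a7)) :=
  stmt_4_general hchar b60 b50 b42 b40 b32 b30 b22 b20 b12 b10 b04 b02 b00 hb42 hb04 g hg Q1 Q2 Q3
    hdQ1 hdQ2 hdQ3 hfact
end

section
/- The polynomial f(x,y) = y⁴ − 2(φ1(x)+φ2(x))y² + (φ1(x)−φ2(x))² is irreducible in k[x,y] for every choice of pairwise distinct elements α1, α2, α3, α4, β1, β2, β3, β4 in k. -/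
/-!
Viewed as a polynomial in `y` over `k[x]`, `f` is the monic biquadratic
`y⁴ - 2(A + B)y² + (A - B)²` with `A = φ₁`, `B = φ₂`, whose roots are `±√A ± √B`.
By Gauss's lemma it suffices to show irreducibility over `k(x)`. There, a linear factor forces
`AB` to be a square, and comparing coefficients shows that a factorization into two quadratics
forces `A`, `B` or `AB` to be a square. None of them is: `φ₁φ₂` is squarefree of positive degree
because the eight roots are distinct, and a squarefree nonunit of an integrally closed domain is
not a square in its fraction field.
-/

section

open Polynomial

variable {R : Type*} [CommRing R]

noncomputable def biquadratic (A B : R) : R[X] :=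
  X ^ 4 - C (2 * (A + B)) * X ^ 2 + C ((A - B) ^ 2)

theorem biquadratic_monic [Nontrivial R] (A B : R) : (biquadratic A B).Monic := by
  unfold biquadratic; monicity!

theorem natDegree_biquadratic [Nontrivial R] (A B : R) : (biquadratic A B).natDegree = 4 := by
  unfold biquadratic; compute_degree!

theorem biquadratic_map {S : Type*} [CommRing S] (f : R →+* S) (A B : R) :
    (biquadratic A B).map f = biquadratic (f A) (f B) := by
  simp [biquadratic, map_ofNat]

theorem coeffs_of_biquadratic_eq_mul {A B a b c d : R}
    (h : biquadratic A B = (X ^ 2 + C a * X + C b) * (X ^ 2 + C c * X + C d)) :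
    a + c = 0 ∧ b + d + a * c = -(2 * (A + B)) ∧ a * d + b * c = 0 ∧ b * d = (A - B) ^ 2 := by
  have hexp : (X ^ 2 + C a * X + C b) * (X ^ 2 + C c * X + C d) = X ^ 4 + C (a + c) * X ^ 3
      + C (b + d + a * c) * X ^ 2 + C (a * d + b * c) * X + C (b * d) := by
    simp only [C_add, C_mul]; ring
  rw [biquadratic, hexp] at h
  have hcoeff : ∀ n, _ := fun n => congrArg (coeff · n) h
  simp only [coeff_add, coeff_sub, coeff_C_mul, coeff_X_pow, coeff_X, coeff_C] at hcoeff
  exact ⟨by simpa using (hcoeff 3).symm, by simpa using (hcoeff 2).symm,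
    by simpa using (hcoeff 1).symm, by simpa using (hcoeff 0).symm⟩

theorem Polynomial.Monic.eq_X_sq_add_C_mul_X_add_C {g : R[X]} (hg : g.Monic)
    (h : g.natDegree = 2) : g = X ^ 2 + C (g.coeff 1) * X + C (g.coeff 0) := by
  conv_lhs => rw [hg.as_sum, h]
  simp only [Finset.sum_range_succ, Finset.range_one, Finset.sum_singleton, pow_zero, mul_one,
    pow_one]
  ring

section Field

variable {K : Type*} [Field K] {A B : K}

theorem isSquare_mul_of_isRoot_biquadratic (h2 : (2 : K) ≠ 0) {c : K}
    (hc : (biquadratic A B).IsRoot c) : IsSquare (A * B) := by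
  -- `biquadratic A B = (X² - A - B)² - 4AB`
  refine ⟨(c ^ 2 - A - B) / 2, ?_⟩
  simp only [biquadratic, IsRoot, eval_add, eval_sub, eval_mul, eval_pow, eval_X, eval_C] at hc
  field_simp
  linear_combination -hc

theorem isSquare_of_biquadratic_eq_mul (h2 : (2 : K) ≠ 0) {a b c d : K}
    (h : biquadratic A B = (X ^ 2 + C a * X + C b) * (X ^ 2 + C c * X + C d)) :
    IsSquare A ∨ IsSquare B ∨ IsSquare (A * B) := by
  obtain ⟨e3, e2, e1, e0⟩ := coeffs_of_biquadratic_eq_mul h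
  obtain rfl : c = -a := by linear_combination e3
  rcases mul_eq_zero.1 (show a * (d - b) = 0 by linear_combination e1) with rfl | hdb
  · -- `b + d = -2(A + B)` and `bd = (A - B)²` give `(b - d)² = 16AB`
    refine Or.inr (Or.inr ⟨(b - d) / 2 / 2, ?_⟩)
    field_simp
    linear_combination (2 * (A + B) - (b + d)) * e2 + 4 * e0
  · obtain rfl : b = d := by linear_combination -hdb
    rcases mul_eq_zero.1 (show (b - (A - B)) * (b + (A - B)) = 0 by linear_combination e0)
      with hb | hb
    · refine Or.inl ⟨a / 2, ?_⟩
      field_simp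
      linear_combination e2 - 2 * hb
    · refine Or.inr (Or.inl ⟨a / 2, ?_⟩)
      field_simp
      linear_combination e2 - 2 * hb

theorem irreducible_biquadratic (h2 : (2 : K) ≠ 0) (hA : ¬IsSquare A) (hB : ¬IsSquare B)
    (hAB : ¬IsSquare (A * B)) : Irreducible (biquadratic A B) := by
  rw [(biquadratic_monic A B).irreducible_iff_natDegree', natDegree_biquadratic]
  refine ⟨fun h => by simpa [h] using natDegree_biquadratic A B, fun f g hf hg hfg hdeg => ?_⟩
  have hfg_deg : f.natDegree + g.natDegree = 4 := by
    rw [← hf.natDegree_mul hg, hfg, natDegree_biquadratic]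
  obtain ⟨hpos, hle⟩ : 0 < g.natDegree ∧ g.natDegree ≤ 2 := by simpa using hdeg
  interval_cases hgd : g.natDegree
  · obtain ⟨c, hc⟩ :=
      exists_root_of_degree_eq_one ((degree_eq_iff_natDegree_eq_of_pos one_pos).2 hgd)
    exact hAB (isSquare_mul_of_isRoot_biquadratic h2 (hc.dvd (Dvd.intro_left f hfg)))
  · rw [hf.eq_X_sq_add_C_mul_X_add_C (by omega), hg.eq_X_sq_add_C_mul_X_add_C hgd] at hfg
    rcases isSquare_of_biquadratic_eq_mul h2 hfg.symm with h | h | h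
    exacts [hA h, hB h, hAB h]

theorem squarefree_prod_X_sub_C_of_nodup {l : List K} (hl : l.Nodup) :
    Squarefree (l.map (X - C ·)).prod := by
  rw [← Fin.prod_univ_fun_getElem]
  exact (separable_prod_X_sub_C_iff.2 (List.nodup_iff_injective_get.1 hl)).squarefree

end Field

section IntegrallyClosed

variable [IsIntegrallyClosed R]

theorem not_isSquare_algebraMap_of_squarefree {K : Type*} [Field K] [Algebra R K]
    [IsFractionRing R K] {q : R} (hq : Squarefree q) (hu : ¬IsUnit q) :
    ¬IsSquare (algebraMap R K q) := by
  rintro ⟨u, hqu⟩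
  have hint : IsIntegral R u :=
    ⟨X ^ 2 - C q, monic_X_pow_sub_C q two_ne_zero, by simp [hqu, sq]⟩
  obtain ⟨r, hr⟩ := IsIntegrallyClosed.isIntegral_iff.1 hint
  have hrr : r * r = q := IsFractionRing.injective R K (by rw [map_mul, hr, hqu])
  have hunit : IsUnit r := hq r ⟨1, by rw [hrr, mul_one]⟩
  exact hu (hrr ▸ hunit.mul hunit)

theorem irreducible_biquadratic_of_squarefree [IsDomain R] {A B : R} (h2 : (2 : R) ≠ 0)
    (hAB : Squarefree (A * B)) (hA : ¬IsUnit A) (hB : ¬IsUnit B) :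
    Irreducible (biquadratic A B) := by
  rw [(biquadratic_monic A B).irreducible_iff_irreducible_map_fraction_map (K := FractionRing R),
    biquadratic_map]
  have hinj := IsFractionRing.injective R (FractionRing R)
  have h2' : (2 : FractionRing R) ≠ 0 := by
    rw [← map_ofNat (algebraMap R _) 2]; exact (map_ne_zero_iff _ hinj).2 h2
  refine irreducible_biquadratic h2'
    (not_isSquare_algebraMap_of_squarefree hAB.of_mul_left hA)
    (not_isSquare_algebraMap_of_squarefree hAB.of_mul_right hB) ?_
  rw [← map_mul]
  exact not_isSquare_algebraMap_of_squarefree hAB (fun h => hA (isUnit_of_mul_isUnit_left h))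

end IntegrallyClosed

end

open MvPolynomial

theorem stmt_5_general
    {k : Type*} [Field k]
    (p : ℕ) [CharP k p] (hp : p = 0 ∨ 5 ≤ p)
    (α1 α2 α3 α4 β1 β2 β3 β4 : k)
    (hdist : ([α1, α2, α3, α4, β1, β2, β3, β4] : List k).Pairwise (· ≠ ·))
    (φ1 φ2 f : MvPolynomial (Fin 2) k)
    (hφ1 : φ1 = (X 0 - C α1) * (X 0 - C α2) * (X 0 - C α3) * (X 0 - C α4))
    (hφ2 : φ2 = (X 0 - C β1) * (X 0 - C β2) * (X 0 - C β3) * (X 0 - C β4))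
    (hf : f = X 1 ^ 4 - C 2 * (φ1 + φ2) * X 1 ^ 2 + (φ1 - φ2) ^ 2) :
    Irreducible f := by
  set P1 : Polynomial k := ([α1, α2, α3, α4].map (Polynomial.X - Polynomial.C ·)).prod
  set P2 : Polynomial k := ([β1, β2, β3, β4].map (Polynomial.X - Polynomial.C ·)).prod
  have hf' : f = Polynomial.Bivariate.equivMvPolynomial k (biquadratic P1 P2) := by
    apply (Polynomial.Bivariate.equivMvPolynomial k).symm.injective
    simp [hf, hφ1, hφ2, biquadratic, P1, P2, Polynomial.C_ofNat]
    ring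
  have h2 : (2 : Polynomial k) ≠ 0 := by
    rw [← map_ofNat Polynomial.C 2, Ne, Polynomial.C_eq_zero, ← Nat.cast_ofNat,
      CharP.cast_eq_zero_iff k p]
    rintro hdvd
    rcases hp with rfl | hp
    · simp at hdvd
    · exact absurd (Nat.le_of_dvd two_pos hdvd) (by omega)
  have hsq : Squarefree (P1 * P2) := by
    simpa only [List.map_append, List.prod_append] using
      squarefree_prod_X_sub_C_of_nodup (l := [α1, α2, α3, α4] ++ [β1, β2, β3, β4]) hdist
  have hP1 : ¬IsUnit P1 := fun h => Polynomial.not_isUnit_X_sub_C α1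
    (isUnit_of_dvd_unit (List.dvd_prod (by simp)) h)
  have hP2 : ¬IsUnit P2 := fun h => Polynomial.not_isUnit_X_sub_C β1
    (isUnit_of_dvd_unit (List.dvd_prod (by simp)) h)
  rw [hf']
  exact (irreducible_biquadratic_of_squarefree h2 hsq hP1 hP2).map _

/-- The sextic f is absolutely irreducible for every choice of pairwise
distinct roots. -/
theorem stmt_5
    {k : Type*} [Field k] [IsAlgClosed k]
    (p : ℕ) [CharP k p] (hp : p = 0 ∨ 5 ≤ p)
    (α1 α2 α3 α4 β1 β2 β3 β4 : k)
    (hdist : ([α1, α2, α3, α4, β1, β2, β3, β4] : List k).Pairwise (· ≠ ·))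
    (φ1 φ2 f : MvPolynomial (Fin 2) k)
    (hφ1 : φ1 = (X 0 - C α1) * (X 0 - C α2) * (X 0 - C α3) * (X 0 - C α4))
    (hφ2 : φ2 = (X 0 - C β1) * (X 0 - C β2) * (X 0 - C β3) * (X 0 - C β4))
    (hf : f = X 1 ^ 4 - C 2 * (φ1 + φ2) * X 1 ^ 2 + (φ1 - φ2) ^ 2) :
    Irreducible f :=
  stmt_5_general p hp α1 α2 α3 α4 β1 β2 β3 β4 hdist φ1 φ2 f hφ1 hφ2 hf
end

section
/- The only points at infinity of ℙ²(k) (i.e., of the form (x:y:0)) lying in Sing are (0:1:0) and (1:0:0). The point (0:1:0) always belongs to Sing, while (1:0:0) belongs to Sing if and only if σ1 = τ1, i.e., α1+α2+α3+α4 = β1+β2+β3+β4. -/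
/-!
Over an infinite field a form is determined by its dehomogenization, so `F` is the explicit sextic
`Y⁴Z² - 2(Φ₁ + Φ₂)Y² + D²`, where `Φᵢ` homogenizes `φᵢ` and `D` is the cubic homogenization of
`φ₁ - φ₂`. At a point `(u : w : 0)` the four conditions become
`(τ₁ - σ₁)²u⁶ = 4u⁴w²`, `6(τ₁ - σ₁)²u⁵ = 16u³w²`, `8u⁴w = 0` and
`(σ₁ + τ₁)u³w² + (τ₁ - σ₁)(σ₂ - τ₂)u⁵ = 0`. Since `2 ≠ 0`, the third one gives `u = 0` or `w = 0`;
every condition holds when `u = 0`, and when `w = 0` they all reduce to `σ₁ = τ₁`.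
-/

open MvPolynomial

namespace MvPolynomial

theorem IsHomogeneous.eval_smul {R σ : Type*} [CommSemiring R] {P : MvPolynomial σ R} {n : ℕ}
    (hP : P.IsHomogeneous n) (c : R) (v : σ → R) :
    eval (c • v) P = c ^ n * eval v P := by
  rw [eval_eq, eval_eq, Finset.mul_sum]
  refine Finset.sum_congr rfl fun d hd => ?_
  simp only [Pi.smul_apply, smul_eq_mul, mul_pow, Finset.prod_mul_distrib,
    Finset.prod_pow_eq_pow_sum]
  rw [← hP (mem_support_iff.mp hd)]
  simp only [Finsupp.weight_apply, Finsupp.sum, Pi.one_apply, smul_eq_mul, mul_one]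
  ring

noncomputable abbrev dehomogenize {R : Type*} [CommSemiring R] :
    MvPolynomial (Fin 3) R →ₐ[R] MvPolynomial (Fin 2) R :=
  aeval ![X 0, X 1, 1]

theorem eval_dehomogenize {R : Type*} [CommSemiring R] (P : MvPolynomial (Fin 3) R) (x y : R) :
    eval ![x, y] (dehomogenize P) = eval ![x, y, 1] P := by
  rw [dehomogenize, aeval_eq_bind₁, eval, eval₂Hom_bind₁]
  congr
  funext i
  fin_cases i <;> simp

theorem IsHomogeneous.eq_of_dehomogenize_eq {k : Type*} [Field k] [Infinite k]
    {F G : MvPolynomial (Fin 3) k} {n : ℕ} (hF : F.IsHomogeneous n) (hG : G.IsHomogeneous n)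
    (h : dehomogenize F = dehomogenize G) : F = G := by
  have hD := hF.sub hG
  -- `Z · (F - G)` vanishes on `z = 0` trivially, and elsewhere after scaling to `z = 1`.
  have hXD : X 2 * (F - G) = 0 := by
    refine ((isHomogeneous_X k 2).mul hD).eq_zero_of_forall_eval_eq_zero fun v => ?_
    by_cases hv : v 2 = 0
    · simp [hv]
    have hscale : v = v 2 • ![v 0 / v 2, v 1 / v 2, 1] := by
      funext i; fin_cases i <;> simp [mul_div_cancel₀ _ hv]
    rw [map_mul, hscale, hD.eval_smul, ← eval_dehomogenize, map_sub, h, sub_self]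
    simp
  simpa [sub_eq_zero, X_ne_zero] using hXD

end MvPolynomial

theorem Projectivization.eval_rep_eq_zero_iff {k σ : Type*} [Field k] {P : MvPolynomial σ k}
    {n : ℕ} (hP : P.IsHomogeneous n) {v : σ → k} (hv : v ≠ 0) :
    eval (Projectivization.mk k v hv).rep P = 0 ↔ eval v P = 0 := by
  obtain ⟨a, ha⟩ := Projectivization.exists_smul_eq_mk_rep k v hv
  rw [← ha, Units.smul_def, hP.eval_smul]
  simp

section SexticForm

variable {R : Type*} [CommRing R] (a₁ a₂ a₃ a₄ b₁ b₂ b₃ b₄ : R)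

noncomputable def quarticForm : MvPolynomial (Fin 3) R :=
  (X 0 - C a₁ * X 2) * (X 0 - C a₂ * X 2) * (X 0 - C a₃ * X 2) * (X 0 - C a₄ * X 2)

-- The cubic homogenization of `φ₁ - φ₂`, whose quartic terms cancel.
noncomputable def cubicForm : MvPolynomial (Fin 3) R :=
  C ((b₁ + b₂ + b₃ + b₄) - (a₁ + a₂ + a₃ + a₄)) * X 0 ^ 3
  + C ((a₁ * a₂ + a₁ * a₃ + a₁ * a₄ + a₂ * a₃ + a₂ * a₄ + a₃ * a₄)
      - (b₁ * b₂ + b₁ * b₃ + b₁ * b₄ + b₂ * b₃ + b₂ * b₄ + b₃ * b₄)) * X 0 ^ 2 * X 2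
  + C ((b₁ * b₂ * b₃ + b₁ * b₂ * b₄ + b₁ * b₃ * b₄ + b₂ * b₃ * b₄)
      - (a₁ * a₂ * a₃ + a₁ * a₂ * a₄ + a₁ * a₃ * a₄ + a₂ * a₃ * a₄)) * X 0 * X 2 ^ 2
  + C (a₁ * a₂ * a₃ * a₄ - b₁ * b₂ * b₃ * b₄) * X 2 ^ 3

noncomputable def sexticForm : MvPolynomial (Fin 3) R :=
  X 1 ^ 4 * X 2 ^ 2 - C 2 * (quarticForm a₁ a₂ a₃ a₄ + quarticForm b₁ b₂ b₃ b₄) * X 1 ^ 2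
  + cubicForm a₁ a₂ a₃ a₄ b₁ b₂ b₃ b₄ ^ 2

theorem isHomogeneous_quarticForm : (quarticForm a₁ a₂ a₃ a₄).IsHomogeneous 4 := by
  have h (c : R) : (X 0 - C c * X 2 : MvPolynomial (Fin 3) R).IsHomogeneous 1 :=
    (isHomogeneous_X _ _).sub ((isHomogeneous_X _ _).C_mul c)
  exact (((h a₁).mul (h a₂)).mul (h a₃)).mul (h a₄)

theorem isHomogeneous_cubicForm : (cubicForm a₁ a₂ a₃ a₄ b₁ b₂ b₃ b₄).IsHomogeneous 3 := by
  refine ((((isHomogeneous_X_pow _ _).C_mul _).add ?_).add ?_).add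
    ((isHomogeneous_X_pow _ _).C_mul _)
  · exact ((isHomogeneous_X_pow _ _).C_mul _).mul (isHomogeneous_X _ _)
  · exact ((isHomogeneous_X _ _).C_mul _).mul (isHomogeneous_X_pow _ _)

theorem isHomogeneous_sexticForm : (sexticForm a₁ a₂ a₃ a₄ b₁ b₂ b₃ b₄).IsHomogeneous 6 := by
  refine (((isHomogeneous_X_pow _ _).mul (isHomogeneous_X_pow _ _)).sub ?_).add
    ((isHomogeneous_cubicForm ..).pow 2)
  exact (((isHomogeneous_quarticForm ..).add (isHomogeneous_quarticForm ..)).C_mul 2).mul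
    (isHomogeneous_X_pow _ _)

theorem dehomogenize_sexticForm :
    dehomogenize (sexticForm a₁ a₂ a₃ a₄ b₁ b₂ b₃ b₄)
      = X 1 ^ 4 - C 2 * ((X 0 - C a₁) * (X 0 - C a₂) * (X 0 - C a₃) * (X 0 - C a₄)
          + (X 0 - C b₁) * (X 0 - C b₂) * (X 0 - C b₃) * (X 0 - C b₄)) * X 1 ^ 2
        + ((X 0 - C a₁) * (X 0 - C a₂) * (X 0 - C a₃) * (X 0 - C a₄)
          - (X 0 - C b₁) * (X 0 - C b₂) * (X 0 - C b₃) * (X 0 - C b₄)) ^ 2 := by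
  simp only [dehomogenize, sexticForm, quarticForm, cubicForm, map_add, map_sub, map_mul,
    map_pow, aeval_X, aeval_C, algebraMap_eq, Matrix.cons_val, Matrix.cons_val_zero,
    Matrix.cons_val_one, one_pow, mul_one]
  ring

variable (u w : R)

theorem eval_sexticForm_at_infinity :
    eval ![u, w, 0] (sexticForm a₁ a₂ a₃ a₄ b₁ b₂ b₃ b₄)
      = ((b₁ + b₂ + b₃ + b₄) - (a₁ + a₂ + a₃ + a₄)) ^ 2 * u ^ 6 - 4 * u ^ 4 * w ^ 2 := by
  simp only [sexticForm, quarticForm, cubicForm, map_add, map_sub, map_mul, map_pow, eval_X,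
    eval_C, Matrix.cons_val, Matrix.cons_val_zero, Matrix.cons_val_one]
  ring

theorem eval_pderiv_zero_sexticForm_at_infinity :
    eval ![u, w, 0] (pderiv 0 (sexticForm a₁ a₂ a₃ a₄ b₁ b₂ b₃ b₄))
      = 6 * ((b₁ + b₂ + b₃ + b₄) - (a₁ + a₂ + a₃ + a₄)) ^ 2 * u ^ 5 - 16 * u ^ 3 * w ^ 2 := by
  simp only [sexticForm, quarticForm, cubicForm, map_add, map_sub, Derivation.leibniz,
    Derivation.leibniz_pow, pderiv_X, derivation_C, Pi.single_eq_same, Pi.single_eq_of_ne,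
    ne_eq, Fin.reduceEq, one_ne_zero, not_false_eq_true, smul_eq_mul, nsmul_eq_mul,
    map_mul, map_pow, map_zero, map_one, map_natCast, eval_X, eval_C, Matrix.cons_val,
    Matrix.cons_val_zero, Matrix.cons_val_one]
  ring

theorem eval_pderiv_one_sexticForm_at_infinity :
    eval ![u, w, 0] (pderiv 1 (sexticForm a₁ a₂ a₃ a₄ b₁ b₂ b₃ b₄)) = -8 * u ^ 4 * w := by
  simp only [sexticForm, quarticForm, cubicForm, map_add, map_sub, Derivation.leibniz,
    Derivation.leibniz_pow, pderiv_X, derivation_C, Pi.single_eq_same, Pi.single_eq_of_ne,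
    ne_eq, Fin.reduceEq, zero_ne_one, not_false_eq_true, smul_eq_mul, nsmul_eq_mul,
    map_mul, map_pow, map_zero, map_one, map_natCast, eval_X, eval_C, Matrix.cons_val,
    Matrix.cons_val_zero, Matrix.cons_val_one]
  ring

theorem eval_pderiv_two_sexticForm_at_infinity :
    eval ![u, w, 0] (pderiv 2 (sexticForm a₁ a₂ a₃ a₄ b₁ b₂ b₃ b₄))
      = 2 * ((a₁ + a₂ + a₃ + a₄) + (b₁ + b₂ + b₃ + b₄)) * u ^ 3 * w ^ 2
        + 2 * ((b₁ + b₂ + b₃ + b₄) - (a₁ + a₂ + a₃ + a₄))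
          * ((a₁ * a₂ + a₁ * a₃ + a₁ * a₄ + a₂ * a₃ + a₂ * a₄ + a₃ * a₄)
            - (b₁ * b₂ + b₁ * b₃ + b₁ * b₄ + b₂ * b₃ + b₂ * b₄ + b₃ * b₄)) * u ^ 5 := by
  simp only [sexticForm, quarticForm, cubicForm, map_add, map_sub, Derivation.leibniz,
    Derivation.leibniz_pow, pderiv_X, derivation_C, Pi.single_eq_same, Pi.single_eq_of_ne,
    ne_eq, Fin.reduceEq, not_false_eq_true, smul_eq_mul, nsmul_eq_mul,
    map_mul, map_pow, map_zero, map_one, map_natCast, eval_X, eval_C, Matrix.cons_val,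
    Matrix.cons_val_zero, Matrix.cons_val_one]
  ring

theorem sexticForm_singular_at_infinity_iff {k : Type*} [Field k] (h2 : (2 : k) ≠ 0)
    (a₁ a₂ a₃ a₄ b₁ b₂ b₃ b₄ u w : k) :
    (eval ![u, w, 0] (sexticForm a₁ a₂ a₃ a₄ b₁ b₂ b₃ b₄) = 0 ∧
      eval ![u, w, 0] (pderiv 0 (sexticForm a₁ a₂ a₃ a₄ b₁ b₂ b₃ b₄)) = 0 ∧
      eval ![u, w, 0] (pderiv 1 (sexticForm a₁ a₂ a₃ a₄ b₁ b₂ b₃ b₄)) = 0 ∧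
      eval ![u, w, 0] (pderiv 2 (sexticForm a₁ a₂ a₃ a₄ b₁ b₂ b₃ b₄)) = 0)
      ↔ u = 0 ∨ (w = 0 ∧ a₁ + a₂ + a₃ + a₄ = b₁ + b₂ + b₃ + b₄) := by
  rw [eval_sexticForm_at_infinity, eval_pderiv_zero_sexticForm_at_infinity,
    eval_pderiv_one_sexticForm_at_infinity, eval_pderiv_two_sexticForm_at_infinity]
  constructor
  · rintro ⟨hF, -, hFy, -⟩
    by_cases hu : u = 0
    · exact Or.inl hu
    have h8 : (8 : k) ≠ 0 := by
      rw [show (8 : k) = 2 ^ 3 by norm_num]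
      exact pow_ne_zero 3 h2
    obtain rfl : w = 0 := by simpa [h8, hu] using hFy
    have hs : (b₁ + b₂ + b₃ + b₄) - (a₁ + a₂ + a₃ + a₄) = 0 := by simpa [hu] using hF
    exact Or.inr ⟨rfl, (sub_eq_zero.1 hs).symm⟩
  · rintro (rfl | ⟨rfl, hs⟩)
    · simp
    · simp [hs]

end SexticForm

/-- The only singular points of the projective sextic F = 0 at infinity are
(0:1:0) and (1:0:0); the point (0:1:0) is always singular, and (1:0:0) is
singular if and only if σ1 = τ1. -/
theorem stmt_6
    {k : Type*} [Field k] [IsAlgClosed k]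
    (p : ℕ) [CharP k p] (hp : p = 0 ∨ 5 ≤ p)
    (α1 α2 α3 α4 β1 β2 β3 β4 : k)
    (σ1 τ1 : k)
    (hσ1 : σ1 = α1 + α2 + α3 + α4)
    (hτ1 : τ1 = β1 + β2 + β3 + β4)
    (φ1 φ2 f : MvPolynomial (Fin 2) k)
    (hφ1 : φ1 = (X 0 - C α1) * (X 0 - C α2) * (X 0 - C α3) * (X 0 - C α4))
    (hφ2 : φ2 = (X 0 - C β1) * (X 0 - C β2) * (X 0 - C β3) * (X 0 - C β4))
    (hf : f = X 1 ^ 4 - C 2 * (φ1 + φ2) * X 1 ^ 2 + (φ1 - φ2) ^ 2)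
    (F : MvPolynomial (Fin 3) k)
    (hFhom : F.IsHomogeneous 6)
    (hFf : aeval ![(X 0 : MvPolynomial (Fin 2) k), X 1, 1] F = f)
    (Sing : Set (Projectivization k (Fin 3 → k)))
    (hSing : ∀ P : Projectivization k (Fin 3 → k),
      P ∈ Sing ↔ (eval P.rep F = 0 ∧
        eval P.rep (pderiv 0 F) = 0 ∧
        eval P.rep (pderiv 1 F) = 0 ∧
        eval P.rep (pderiv 2 F) = 0)) :
    (∀ (x y : k) (h : (![x, y, 0] : Fin 3 → k) ≠ 0),
      Projectivization.mk k (![x, y, 0] : Fin 3 → k) h ∈ Sing →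
        Projectivization.mk k (![x, y, 0] : Fin 3 → k) h
          = Projectivization.mk k (![0, 1, 0] : Fin 3 → k)
              (by intro hc; simpa using congrFun hc 1) ∨
        Projectivization.mk k (![x, y, 0] : Fin 3 → k) h
          = Projectivization.mk k (![1, 0, 0] : Fin 3 → k)
              (by intro hc; simpa using congrFun hc 0))
    ∧ Projectivization.mk k (![0, 1, 0] : Fin 3 → k)
        (by intro hc; simpa using congrFun hc 1) ∈ Sing
    ∧ (Projectivization.mk k (![1, 0, 0] : Fin 3 → k)
        (by intro hc; simpa using congrFun hc 0) ∈ Sing ↔ σ1 = τ1) := by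
  have h2 : (2 : k) ≠ 0 := by
    rw [← Nat.cast_ofNat, Ne, CharP.cast_eq_zero_iff k p]
    rintro hdvd
    rcases hp with rfl | hp
    · exact two_ne_zero (Nat.eq_zero_of_zero_dvd hdvd)
    · have := Nat.le_of_dvd two_pos hdvd
      omega
  have hG := isHomogeneous_sexticForm α1 α2 α3 α4 β1 β2 β3 β4
  have hF : F = sexticForm α1 α2 α3 α4 β1 β2 β3 β4 :=
    hFhom.eq_of_dehomogenize_eq hG (by rw [hFf, hf, hφ1, hφ2, dehomogenize_sexticForm])
  have hmem : ∀ x y (h : (![x, y, 0] : Fin 3 → k) ≠ 0),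
      Projectivization.mk k ![x, y, 0] h ∈ Sing ↔ x = 0 ∨ (y = 0 ∧ σ1 = τ1) := by
    intro x y h
    simp only [hSing, hF, Projectivization.eval_rep_eq_zero_iff hG,
      Projectivization.eval_rep_eq_zero_iff hG.pderiv, sexticForm_singular_at_infinity_iff h2,
      hσ1, hτ1]
  refine ⟨fun x y h hxy => ?_, (hmem 0 1 _).2 (Or.inl rfl), (hmem 1 0 _).trans (by simp)⟩
  rcases (hmem x y h).1 hxy with rfl | ⟨rfl, -⟩
  · exact Or.inl ((Projectivization.mk_eq_mk_iff' k _ _ _ _).2 ⟨y, by simp⟩)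
  · exact Or.inr ((Projectivization.mk_eq_mk_iff' k _ _ _ _).2 ⟨x, by simp⟩)
end

section
/- There is no point (x, y) ∈ k² with y ≠ 0 at which f and both partial derivatives f_x and f_y vanish simultaneously; i.e., the affine curve f = 0 has no singular point with y ≠ 0. -/
/-!
Write `a = φ₁(x)`, `b = φ₂(x)`. Then `f = (y² - a - b)² - 4ab` and `f_y = 4y(y² - a - b)`, so at a
singular point with `y ≠ 0` (and `2` invertible) `y² = a + b` and `ab = 0`; substituting into
`f_x = -2(a' + b')y² + 2(a - b)(a' - b')` gives `a'b + ab' = 0`. Since `a + b = y² ≠ 0`, one of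
`a, b` vanishes and the other does not, say `a = 0 ≠ b`, and then `a' = 0`: `x` is a multiple root
of `φ₁`, which is impossible because `φ₁` has distinct roots.
-/

open MvPolynomial

theorem eq_zero_and_eq_zero_or_of_sqrtSum_singular {K : Type*} [Field K] (h2 : (2 : K) ≠ 0)
    {a b a' b' y : K} (hy : y ≠ 0)
    (hf : y ^ 4 - 2 * (a + b) * y ^ 2 + (a - b) ^ 2 = 0)
    (hfx : -2 * (a' + b') * y ^ 2 + 2 * (a - b) * (a' - b') = 0)
    (hfy : 4 * y ^ 3 - 4 * (a + b) * y = 0) :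
    (a = 0 ∧ a' = 0) ∨ (b = 0 ∧ b' = 0) := by
  have h4 : (4 : K) ≠ 0 := by simpa [show (4 : K) = 2 * 2 by norm_num] using h2
  have hy2 : y ^ 2 = a + b := by
    have : 4 * y * (y ^ 2 - (a + b)) = 0 := by linear_combination hfy
    simpa [h4, hy, sub_eq_zero] using this
  have hab : a * b = 0 := by
    have : 4 * (a * b) = 0 := by linear_combination (y ^ 2 - a - b) * hy2 - hf
    simpa [h4] using this
  have hab' : a' * b + a * b' = 0 := by
    have : 4 * (a' * b + a * b') = 0 := by linear_combination (-2 * (a' + b')) * hy2 - hfx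
    simpa [h4] using this
  have hsum : a + b ≠ 0 := hy2 ▸ pow_ne_zero 2 hy
  rcases mul_eq_zero.mp hab with rfl | rfl
  · exact .inl ⟨rfl, by simpa [show b ≠ 0 by simpa using hsum] using hab'⟩
  · exact .inr ⟨rfl, by simpa [show a ≠ 0 by simpa using hsum] using hab'⟩

theorem List.Nodup.separable_prod_map_X_sub_C {K : Type*} [Field K] {l : List K} (hl : l.Nodup) :
    (l.map fun a => Polynomial.X - Polynomial.C a).prod.Separable := by
  rw [← Fin.prod_univ_fun_getElem]
  exact Polynomial.separable_prod_X_sub_C_iff.mpr (List.nodup_iff_injective_getElem.mp hl)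

namespace MvPolynomial

variable {R σ : Type*} [CommRing R] (p : Polynomial R)

theorem pderiv_toMvPolynomial_self (i : σ) :
    pderiv i (p.toMvPolynomial i) = (Polynomial.derivative p).toMvPolynomial i := by
  rw [Polynomial.toMvPolynomial, Derivation.map_aeval, pderiv_X_self, smul_eq_mul, mul_one]

theorem pderiv_toMvPolynomial_of_ne {i j : σ} (h : j ≠ i) :
    pderiv j (p.toMvPolynomial i) = 0 := by
  rw [Polynomial.toMvPolynomial, Derivation.map_aeval, pderiv_X_of_ne h.symm, smul_zero]

end MvPolynomial

/-- `y⁴ - 2(φ₁(x) + φ₂(x))y² + (φ₁(x) - φ₂(x))²`, the product of the four `y ± √φ₁(x) ± √φ₂(x)`. -/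
noncomputable def sqrtSumCurve {K : Type*} [CommRing K] (φ₁ φ₂ : Polynomial K) :
    MvPolynomial (Fin 2) K :=
  X 1 ^ 4 - C 2 * (φ₁.toMvPolynomial 0 + φ₂.toMvPolynomial 0) * X 1 ^ 2 +
    (φ₁.toMvPolynomial 0 - φ₂.toMvPolynomial 0) ^ 2

section sqrtSumCurve

variable {K : Type*} [CommRing K] (φ₁ φ₂ : Polynomial K) (x y : K)

theorem eval_sqrtSumCurve :
    eval ![x, y] (sqrtSumCurve φ₁ φ₂) =
      y ^ 4 - 2 * (φ₁.eval x + φ₂.eval x) * y ^ 2 + (φ₁.eval x - φ₂.eval x) ^ 2 := by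
  simp [sqrtSumCurve]

theorem eval_pderiv_zero_sqrtSumCurve :
    eval ![x, y] (pderiv 0 (sqrtSumCurve φ₁ φ₂)) =
      -2 * (φ₁.derivative.eval x + φ₂.derivative.eval x) * y ^ 2 +
        2 * (φ₁.eval x - φ₂.eval x) * (φ₁.derivative.eval x - φ₂.derivative.eval x) := by
  simp [sqrtSumCurve, pderiv_toMvPolynomial_self]
  ring

theorem eval_pderiv_one_sqrtSumCurve :
    eval ![x, y] (pderiv 1 (sqrtSumCurve φ₁ φ₂)) =
      4 * y ^ 3 - 4 * (φ₁.eval x + φ₂.eval x) * y := by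
  simp [sqrtSumCurve, pderiv_toMvPolynomial_of_ne]
  ring

end sqrtSumCurve

theorem sqrtSumCurve_nonsingular {K : Type*} [Field K] (h2 : (2 : K) ≠ 0) {φ₁ φ₂ : Polynomial K}
    (hφ₁ : φ₁.Separable) (hφ₂ : φ₂.Separable) (x : K) {y : K} (hy : y ≠ 0)
    (hf : eval ![x, y] (sqrtSumCurve φ₁ φ₂) = 0)
    (hfx : eval ![x, y] (pderiv 0 (sqrtSumCurve φ₁ φ₂)) = 0)
    (hfy : eval ![x, y] (pderiv 1 (sqrtSumCurve φ₁ φ₂)) = 0) : False := by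
  rw [eval_sqrtSumCurve] at hf
  rw [eval_pderiv_zero_sqrtSumCurve] at hfx
  rw [eval_pderiv_one_sqrtSumCurve] at hfy
  obtain ⟨hroot, hderiv⟩ | ⟨hroot, hderiv⟩ :=
    eq_zero_and_eq_zero_or_of_sqrtSum_singular h2 hy hf hfx hfy
  · exact hφ₁.eval₂_derivative_ne_zero (RingHom.id K) hroot hderiv
  · exact hφ₂.eval₂_derivative_ne_zero (RingHom.id K) hroot hderiv

theorem stmt_8_general
    {k : Type*} [Field k]
    (p : ℕ) [CharP k p] (hp : p = 0 ∨ 5 ≤ p)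
    (α1 α2 α3 α4 β1 β2 β3 β4 : k)
    (hdist : ([α1, α2, α3, α4, β1, β2, β3, β4] : List k).Pairwise (· ≠ ·))
    (φ1 φ2 f : MvPolynomial (Fin 2) k)
    (hφ1 : φ1 = (X 0 - C α1) * (X 0 - C α2) * (X 0 - C α3) * (X 0 - C α4))
    (hφ2 : φ2 = (X 0 - C β1) * (X 0 - C β2) * (X 0 - C β3) * (X 0 - C β4))
    (hf : f = X 1 ^ 4 - C 2 * (φ1 + φ2) * X 1 ^ 2 + (φ1 - φ2) ^ 2) :
    ¬ ∃ x y : k, y ≠ 0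
      ∧ eval (![x, y] : Fin 2 → k) f = 0
      ∧ eval (![x, y] : Fin 2 → k) (pderiv 0 f) = 0
      ∧ eval (![x, y] : Fin 2 → k) (pderiv 1 f) = 0 := by
  have h2 : (2 : k) ≠ 0 := by
    intro h
    have hp2 := (CharP.cast_eq_zero_iff k p 2).mp (by exact_mod_cast h)
    rcases hp with rfl | hp
    · simp at hp2
    · exact absurd (Nat.le_of_dvd two_pos hp2) (by omega)
  set q₁ := ([α1, α2, α3, α4].map fun a => Polynomial.X - Polynomial.C a).prod
  set q₂ := ([β1, β2, β3, β4].map fun a => Polynomial.X - Polynomial.C a).prod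
  have hnodup : ([α1, α2, α3, α4] ++ [β1, β2, β3, β4]).Nodup := hdist
  have hq₁ : q₁.Separable :=
    (hnodup.sublist (List.sublist_append_left _ _)).separable_prod_map_X_sub_C
  have hq₂ : q₂.Separable :=
    (hnodup.sublist (List.sublist_append_right _ _)).separable_prod_map_X_sub_C
  have hf' : f = sqrtSumCurve q₁ q₂ := by
    simp only [hf, hφ1, hφ2, sqrtSumCurve, q₁, q₂, List.map_cons, List.map_nil, List.prod_cons,
      List.prod_nil, mul_one, map_mul, map_sub, Polynomial.toMvPolynomial_X,
      Polynomial.toMvPolynomial_C]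
    ring
  rintro ⟨x, y, hy, hfxy, hfx, hfy⟩
  subst hf'
  exact sqrtSumCurve_nonsingular h2 hq₁ hq₂ x hy hfxy hfx hfy

/-- The affine curve f = 0 has no singular point (x, y) with y ≠ 0. -/
theorem stmt_8
    {k : Type*} [Field k] [IsAlgClosed k]
    (p : ℕ) [CharP k p] (hp : p = 0 ∨ 5 ≤ p)
    (α1 α2 α3 α4 β1 β2 β3 β4 : k)
    (hdist : ([α1, α2, α3, α4, β1, β2, β3, β4] : List k).Pairwise (· ≠ ·))
    (φ1 φ2 f : MvPolynomial (Fin 2) k)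
    (hφ1 : φ1 = (X 0 - C α1) * (X 0 - C α2) * (X 0 - C α3) * (X 0 - C α4))
    (hφ2 : φ2 = (X 0 - C β1) * (X 0 - C β2) * (X 0 - C β3) * (X 0 - C β4))
    (hf : f = X 1 ^ 4 - C 2 * (φ1 + φ2) * X 1 ^ 2 + (φ1 - φ2) ^ 2) :
    ¬ ∃ x y : k, y ≠ 0
      ∧ eval (![x, y] : Fin 2 → k) f = 0
      ∧ eval (![x, y] : Fin 2 → k) (pderiv 0 f) = 0
      ∧ eval (![x, y] : Fin 2 → k) (pderiv 1 f) = 0 :=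
  stmt_8_general p hp α1 α2 α3 α4 β1 β2 β3 β4 hdist φ1 φ2 f hφ1 hφ2 hf
end

section
/- If (ξ, 0) ∈ k² is a singular point of the affine curve f = 0 (that is, f(ξ,0) = f_x(ξ,0) = f_y(ξ,0) = 0), then the second-order partial derivative f_yy does not vanish at (ξ, 0); in particular, every such singular point has multiplicity exactly 2. -/
/-!
At a point with `y = 0` the curve equation reduces to `(φ₁ - φ₂)² = 0`, so `φ₁(ξ) = φ₂(ξ)`, while
`f_yy = 12 y² - 4 (φ₁ + φ₂)` evaluates to `-8 φ₁(ξ)`. This is nonzero: `2 ≠ 0` in `k`, and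
`φ₁(ξ) = 0` would make `ξ` a common root of `φ₁` and `φ₂`, whose roots are pairwise distinct.
-/

open MvPolynomial

namespace MvPolynomial

variable {σ R : Type*} [CommRing R] {j : σ} {x : σ → R}

theorem eval_quartic_of_eq_zero (A B : MvPolynomial σ R) (hx : x j = 0) :
    eval x (X j ^ 4 - C 2 * (A + B) * X j ^ 2 + (A - B) ^ 2) = (eval x A - eval x B) ^ 2 := by
  simp [hx]

theorem eval_pderiv_pderiv_quartic_of_eq_zero {A B : MvPolynomial σ R}
    (hA : pderiv j A = 0) (hB : pderiv j B = 0) (hx : x j = 0) :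
    eval x (pderiv j (pderiv j (X j ^ 4 - C 2 * (A + B) * X j ^ 2 + (A - B) ^ 2))) =
      -4 * (eval x A + eval x B) := by
  simp only [map_add, map_sub, map_mul, map_pow, Derivation.leibniz_pow, Derivation.leibniz,
    Nat.add_one_sub_one, pow_one, pderiv_X_self, derivation_C, hA, hB, eval_ofNat, eval_X,
    eval_C, hx, smul_eq_mul, nsmul_eq_mul, Nat.cast_ofNat, mul_one, mul_zero, add_zero]
  ring

theorem eval_four_X_sub_C_eq_zero_iff [IsDomain R] (i : σ) (a₁ a₂ a₃ a₄ : R) :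
    eval x ((X i - C a₁) * (X i - C a₂) * (X i - C a₃) * (X i - C a₄)) = 0 ↔
      x i ∈ [a₁, a₂, a₃, a₄] := by
  simp [sub_eq_zero, or_assoc]

end MvPolynomial

theorem stmt_9_general
    {k : Type*} [Field k]
    (p : ℕ) [CharP k p] (hp : p = 0 ∨ 5 ≤ p)
    (α1 α2 α3 α4 β1 β2 β3 β4 : k)
    (hdist : ([α1, α2, α3, α4, β1, β2, β3, β4] : List k).Pairwise (· ≠ ·))
    (φ1 φ2 f : MvPolynomial (Fin 2) k)
    (hφ1 : φ1 = (X 0 - C α1) * (X 0 - C α2) * (X 0 - C α3) * (X 0 - C α4))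
    (hφ2 : φ2 = (X 0 - C β1) * (X 0 - C β2) * (X 0 - C β3) * (X 0 - C β4))
    (hf : f = X 1 ^ 4 - C 2 * (φ1 + φ2) * X 1 ^ 2 + (φ1 - φ2) ^ 2) :
    ∀ ξ : k,
      eval (![ξ, 0] : Fin 2 → k) f = 0 →
      eval (![ξ, 0] : Fin 2 → k) (pderiv 0 f) = 0 →
      eval (![ξ, 0] : Fin 2 → k) (pderiv 1 f) = 0 →
      eval (![ξ, 0] : Fin 2 → k) (pderiv 1 (pderiv 1 f)) ≠ 0 := by
  intro ξ hf₀ _ _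
  have hy : (![ξ, 0] : Fin 2 → k) 1 = 0 := rfl
  have hφ_eq : eval ![ξ, 0] φ1 = eval ![ξ, 0] φ2 := by
    rw [hf, eval_quartic_of_eq_zero _ _ hy] at hf₀
    exact sub_eq_zero.mp (pow_eq_zero_iff two_ne_zero |>.mp hf₀)
  have hφ_ne : eval ![ξ, 0] φ1 ≠ 0 := by
    intro h
    have hα := hφ1 ▸ h
    have hβ := hφ2 ▸ hφ_eq ▸ h
    rw [eval_four_X_sub_C_eq_zero_iff] at hα hβ
    exact (List.pairwise_append.mp hdist).2.2 _ hα _ hβ rfl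
  have h2 : (2 : k) ≠ 0 := by
    have : ¬ p ∣ 2 := by
      rcases hp with rfl | hp
      · simp
      · intro h
        have := Nat.le_of_dvd two_pos h
        omega
    exact_mod_cast (CharP.cast_eq_zero_iff k p 2).not.mpr this
  have hφ_indep_y : pderiv 1 φ1 = 0 ∧ pderiv 1 φ2 = 0 := by
    subst hφ1 hφ2; simp
  rw [hf, eval_pderiv_pderiv_quartic_of_eq_zero hφ_indep_y.1 hφ_indep_y.2 hy, ← hφ_eq,
    show (-4 : k) * (eval ![ξ, 0] φ1 + eval ![ξ, 0] φ1) = -(2 * 2 * 2) * eval ![ξ, 0] φ1 by ring]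
  simp [h2, hφ_ne]

/-- Every singular point (ξ, 0) of the affine curve f = 0 has multiplicity
exactly 2: the second-order partial derivative f_yy does not vanish there. -/
theorem stmt_9
    {k : Type*} [Field k] [IsAlgClosed k]
    (p : ℕ) [CharP k p] (hp : p = 0 ∨ 5 ≤ p)
    (α1 α2 α3 α4 β1 β2 β3 β4 : k)
    (hdist : ([α1, α2, α3, α4, β1, β2, β3, β4] : List k).Pairwise (· ≠ ·))
    (φ1 φ2 f : MvPolynomial (Fin 2) k)
    (hφ1 : φ1 = (X 0 - C α1) * (X 0 - C α2) * (X 0 - C α3) * (X 0 - C α4))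
    (hφ2 : φ2 = (X 0 - C β1) * (X 0 - C β2) * (X 0 - C β3) * (X 0 - C β4))
    (hf : f = X 1 ^ 4 - C 2 * (φ1 + φ2) * X 1 ^ 2 + (φ1 - φ2) ^ 2) :
    ∀ ξ : k,
      eval (![ξ, 0] : Fin 2 → k) f = 0 →
      eval (![ξ, 0] : Fin 2 → k) (pderiv 0 f) = 0 →
      eval (![ξ, 0] : Fin 2 → k) (pderiv 1 f) = 0 →
      eval (![ξ, 0] : Fin 2 → k) (pderiv 1 (pderiv 1 f)) ≠ 0 :=
  stmt_9_general p hp α1 α2 α3 α4 β1 β2 β3 β4 hdist φ1 φ2 f hφ1 hφ2 hf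
end

section
/- The set of singular points of the affine curve f = 0, namely the set of (x, y) ∈ k² with f(x,y) = f_x(x,y) = f_y(x,y) = 0, is exactly the set {(ξ, 0) : ξ ∈ k, h1(ξ) = 0} of points on the x-axis whose first coordinate is a root of h1. -/
/-!
Write `a = φ₁(x)`, `b = φ₂(x)`. Then `f = (y² - a - b)² - 4ab` and `f_y = 4y(y² - a - b)`.
Off the x-axis, `f_y = 0` forces `y² = a + b`, so `f = 0` forces `ab = 0`, and then
`f_x = -4(φ₁φ₂)'(x)`. Since `φ₁φ₂` has eight distinct roots, `(φ₁φ₂)'` does not vanish where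
`φ₁φ₂` does: no singular point lies off the x-axis. On the x-axis `f = (a - b)²`, and both
partial derivatives vanish as soon as `a = b`, i.e. `h₁(x) = 0`.
-/

open MvPolynomial
open Polynomial (derivative)

section Curve

variable {R : Type*} [CommRing R]

/-- The curve `∏ (y ± √A(x) ± √B(x)) = 0`. -/
noncomputable def biquadraticCurve (A B : Polynomial R) : MvPolynomial (Fin 2) R :=
  X 1 ^ 4 - C 2 * (Polynomial.aeval (X 0) A + Polynomial.aeval (X 0) B) * X 1 ^ 2
    + (Polynomial.aeval (X 0) A - Polynomial.aeval (X 0) B) ^ 2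

def singularLocus (f : MvPolynomial (Fin 2) R) : Set (R × R) :=
  {P | eval ![P.1, P.2] f = 0 ∧ eval ![P.1, P.2] (pderiv 0 f) = 0
    ∧ eval ![P.1, P.2] (pderiv 1 f) = 0}

lemma eval_aeval_X_zero (A : Polynomial R) (v : Fin 2 → R) :
    eval v (Polynomial.aeval (X 0) A) = A.eval (v 0) := by
  simpa using (Polynomial.aeval_algHom_apply (aeval v) (X 0) A).symm

variable (A B : Polynomial R) (x y : R)

lemma eval_biquadraticCurve :
    eval ![x, y] (biquadraticCurve A B)
      = y ^ 4 - 2 * (A.eval x + B.eval x) * y ^ 2 + (A.eval x - B.eval x) ^ 2 := by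
  simp [biquadraticCurve, eval_aeval_X_zero]

lemma eval_pderiv_zero_biquadraticCurve :
    eval ![x, y] (pderiv 0 (biquadraticCurve A B))
      = 2 * (A.eval x - B.eval x) * ((derivative A).eval x - (derivative B).eval x)
        - 2 * ((derivative A).eval x + (derivative B).eval x) * y ^ 2 := by
  simp only [biquadraticCurve, map_add, map_sub, map_mul, map_pow, Derivation.leibniz,
    Derivation.leibniz_pow, Derivation.map_aeval, derivation_C, pderiv_X, Pi.single_eq_same,
    Pi.single_eq_of_ne, ne_eq, one_ne_zero, not_false_eq_true, smul_eq_mul, nsmul_eq_mul,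
    Nat.cast_ofNat, map_zero, map_one, eval_X, eval_C, eval_ofNat, eval_aeval_X_zero,
    Matrix.cons_val_zero, Matrix.cons_val_one, Matrix.cons_val_fin_one]
  ring

lemma eval_pderiv_one_biquadraticCurve :
    eval ![x, y] (pderiv 1 (biquadraticCurve A B))
      = 4 * y ^ 3 - 4 * (A.eval x + B.eval x) * y := by
  simp only [biquadraticCurve, map_add, map_sub, map_mul, map_pow, Derivation.leibniz,
    Derivation.leibniz_pow, Derivation.map_aeval, derivation_C, pderiv_X, Pi.single_eq_same,
    Pi.single_eq_of_ne, ne_eq, zero_ne_one, not_false_eq_true, smul_eq_mul, nsmul_eq_mul,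
    Nat.cast_ofNat, map_zero, map_one, eval_X, eval_C, eval_ofNat, eval_aeval_X_zero,
    Matrix.cons_val_zero, Matrix.cons_val_one, Matrix.cons_val_fin_one]
  ring

end Curve

section Singular

variable {R : Type*} [CommRing R] [IsDomain R]

theorem biquadratic_singular_iff (h2 : (2 : R) ≠ 0) {a b a' b' y : R}
    (hsep : a * b = 0 → a' * b + a * b' ≠ 0) :
    (y ^ 4 - 2 * (a + b) * y ^ 2 + (a - b) ^ 2 = 0
      ∧ 2 * (a - b) * (a' - b') - 2 * (a' + b') * y ^ 2 = 0
      ∧ 4 * y ^ 3 - 4 * (a + b) * y = 0) ↔ y = 0 ∧ a = b := by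
  have h4 : (4 : R) ≠ 0 := by
    rw [show (4 : R) = 2 * 2 by norm_num]
    exact mul_ne_zero h2 h2
  constructor
  · rintro ⟨hF, hFx, hFy⟩
    have hy : y = 0 := by
      by_contra hy
      have hy2 : y ^ 2 = a + b := by
        have : 4 * y * (y ^ 2 - (a + b)) = 0 := by linear_combination hFy
        simpa [h4, hy, sub_eq_zero] using this
      have hab : a * b = 0 := by
        have : 4 * (a * b) = 0 := by linear_combination -hF + (y ^ 2 - (a + b)) * hy2
        simpa [h4] using this
      refine hsep hab ?_
      have : 4 * (a' * b + a * b') = 0 := by linear_combination -hFx - 2 * (a' + b') * hy2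
      simpa [h4] using this
    subst hy
    refine ⟨rfl, sub_eq_zero.mp (pow_eq_zero_iff two_ne_zero |>.mp ?_)⟩
    linear_combination hF
  · rintro ⟨rfl, rfl⟩
    refine ⟨?_, ?_, ?_⟩ <;> ring

theorem singularLocus_biquadraticCurve (h2 : (2 : R) ≠ 0) {A B : Polynomial R}
    (hAB : (A * B).Separable) :
    singularLocus (biquadraticCurve A B) = {P | P.2 = 0 ∧ A.eval P.1 = B.eval P.1} := by
  ext ⟨x, y⟩
  simp only [singularLocus, Set.mem_ofPred_eq, eval_biquadraticCurve,
    eval_pderiv_zero_biquadraticCurve, eval_pderiv_one_biquadraticCurve]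
  refine biquadratic_singular_iff h2 fun hroot => ?_
  simpa [Polynomial.derivative_mul] using
    hAB.aeval_derivative_ne_zero (x := x) (by simpa using hroot)

end Singular

lemma separable_prod_X_sub_C_of_nodup {F : Type*} [Field F] {l : List F} (hl : l.Nodup) :
    (l.map fun a => Polynomial.X - Polynomial.C a).prod.Separable := by
  classical
  rw [← List.prod_toFinset _ hl]
  exact Polynomial.separable_prod_X_sub_C_iff'.mpr fun _ _ _ _ h => h

theorem stmt_10_general
    {k : Type*} [Field k]
    (p : ℕ) [CharP k p] (hp : p = 0 ∨ 5 ≤ p)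
    (α1 α2 α3 α4 β1 β2 β3 β4 : k)
    (hdist : ([α1, α2, α3, α4, β1, β2, β3, β4] : List k).Pairwise (· ≠ ·))
    (σ1 σ2 σ3 σ4 τ1 τ2 τ3 τ4 : k)
    (hσ1 : σ1 = α1 + α2 + α3 + α4)
    (hσ2 : σ2 = α1 * α2 + α1 * α3 + α1 * α4 + α2 * α3 + α2 * α4 + α3 * α4)
    (hσ3 : σ3 = α1 * α2 * α3 + α1 * α2 * α4 + α1 * α3 * α4 + α2 * α3 * α4)
    (hσ4 : σ4 = α1 * α2 * α3 * α4)
    (hτ1 : τ1 = β1 + β2 + β3 + β4)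
    (hτ2 : τ2 = β1 * β2 + β1 * β3 + β1 * β4 + β2 * β3 + β2 * β4 + β3 * β4)
    (hτ3 : τ3 = β1 * β2 * β3 + β1 * β2 * β4 + β1 * β3 * β4 + β2 * β3 * β4)
    (hτ4 : τ4 = β1 * β2 * β3 * β4)
    (φ1 φ2 f : MvPolynomial (Fin 2) k)
    (hφ1 : φ1 = (X 0 - C α1) * (X 0 - C α2) * (X 0 - C α3) * (X 0 - C α4))
    (hφ2 : φ2 = (X 0 - C β1) * (X 0 - C β2) * (X 0 - C β3) * (X 0 - C β4))
    (hf : f = X 1 ^ 4 - C 2 * (φ1 + φ2) * X 1 ^ 2 + (φ1 - φ2) ^ 2)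
    (h1 : k → k)
    (hh1 : ∀ x : k, h1 x = (σ1 - τ1) * x ^ 3 - (σ2 - τ2) * x ^ 2 + (σ3 - τ3) * x - (σ4 - τ4)) :
    {P : k × k | eval (![P.1, P.2] : Fin 2 → k) f = 0
      ∧ eval (![P.1, P.2] : Fin 2 → k) (pderiv 0 f) = 0
      ∧ eval (![P.1, P.2] : Fin 2 → k) (pderiv 1 f) = 0}
    = {P : k × k | ∃ ξ : k, h1 ξ = 0 ∧ P = (ξ, 0)} := by
  let A := ([α1, α2, α3, α4].map fun a => Polynomial.X - Polynomial.C a).prod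
  let B := ([β1, β2, β3, β4].map fun b => Polynomial.X - Polynomial.C b).prod
  have hf' : f = biquadraticCurve A B := by simp [hf, hφ1, hφ2, biquadraticCurve, A, B, mul_assoc]
  have hsep : (A * B).Separable := by
    rw [← List.prod_append, ← List.map_append]
    exact separable_prod_X_sub_C_of_nodup hdist
  have hh1' (x : k) : h1 x = B.eval x - A.eval x := by
    simp only [hh1, hσ1, hσ2, hσ3, hσ4, hτ1, hτ2, hτ3, hτ4, A, B, List.map_cons, List.map_nil,
      List.prod_cons, List.prod_nil, mul_one, Polynomial.eval_mul, Polynomial.eval_sub,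
      Polynomial.eval_X, Polynomial.eval_C]
    ring
  have h2 : (2 : k) ≠ 0 := Ring.two_ne_zero (by rw [ringChar.eq k p]; omega)
  change singularLocus f = _
  rw [hf', singularLocus_biquadraticCurve h2 hsep]
  ext ⟨x, y⟩
  simp only [Set.mem_ofPred_eq, Prod.mk.injEq, hh1', sub_eq_zero]
  constructor
  · rintro ⟨rfl, hx⟩
    exact ⟨x, hx.symm, rfl, rfl⟩
  · rintro ⟨ξ, hξ, rfl, rfl⟩
    exact ⟨rfl, hξ.symm⟩

/-- The singular points of the affine curve f = 0 are exactly the points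
(ξ, 0) where ξ is a root of h1. -/
theorem stmt_10
    {k : Type*} [Field k] [IsAlgClosed k]
    (p : ℕ) [CharP k p] (hp : p = 0 ∨ 5 ≤ p)
    (α1 α2 α3 α4 β1 β2 β3 β4 : k)
    (hdist : ([α1, α2, α3, α4, β1, β2, β3, β4] : List k).Pairwise (· ≠ ·))
    (σ1 σ2 σ3 σ4 τ1 τ2 τ3 τ4 : k)
    (hσ1 : σ1 = α1 + α2 + α3 + α4)
    (hσ2 : σ2 = α1 * α2 + α1 * α3 + α1 * α4 + α2 * α3 + α2 * α4 + α3 * α4)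
    (hσ3 : σ3 = α1 * α2 * α3 + α1 * α2 * α4 + α1 * α3 * α4 + α2 * α3 * α4)
    (hσ4 : σ4 = α1 * α2 * α3 * α4)
    (hτ1 : τ1 = β1 + β2 + β3 + β4)
    (hτ2 : τ2 = β1 * β2 + β1 * β3 + β1 * β4 + β2 * β3 + β2 * β4 + β3 * β4)
    (hτ3 : τ3 = β1 * β2 * β3 + β1 * β2 * β4 + β1 * β3 * β4 + β2 * β3 * β4)
    (hτ4 : τ4 = β1 * β2 * β3 * β4)
    (φ1 φ2 f : MvPolynomial (Fin 2) k)
    (hφ1 : φ1 = (X 0 - C α1) * (X 0 - C α2) * (X 0 - C α3) * (X 0 - C α4))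
    (hφ2 : φ2 = (X 0 - C β1) * (X 0 - C β2) * (X 0 - C β3) * (X 0 - C β4))
    (hf : f = X 1 ^ 4 - C 2 * (φ1 + φ2) * X 1 ^ 2 + (φ1 - φ2) ^ 2)
    (h1 : k → k)
    (hh1 : ∀ x : k, h1 x = (σ1 - τ1) * x ^ 3 - (σ2 - τ2) * x ^ 2 + (σ3 - τ3) * x - (σ4 - τ4)) :
    {P : k × k | eval (![P.1, P.2] : Fin 2 → k) f = 0
      ∧ eval (![P.1, P.2] : Fin 2 → k) (pderiv 0 f) = 0
      ∧ eval (![P.1, P.2] : Fin 2 → k) (pderiv 1 f) = 0}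
    = {P : k × k | ∃ ξ : k, h1 ξ = 0 ∧ P = (ξ, 0)} :=
  stmt_10_general p hp α1 α2 α3 α4 β1 β2 β3 β4 hdist σ1 σ2 σ3 σ4 τ1 τ2 τ3 τ4 hσ1 hσ2 hσ3 hσ4 hτ1 hτ2
    hτ3 hτ4 φ1 φ2 f hφ1 hφ2 hf h1 hh1
end
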